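/- Let I be a composition of n and let τ ∈ S_n be a permutation whose descent composition C(τ) has mirror image equal to I (i.e. \overline{C(τ)} = I). Then the Yang-Baxter element Y_{ω_n}(τ) ∈ H_n(0), where ω_n is the longest permutation, satisfies T_i · Y_{ω_n}(τ) = -Y_{ω_n}(τ) if i ∈ D(I) and T_i · Y_{ω_n}(τ) = 0 if i ∉ D(I); that is, Y_{ω_n}(τ) = η_I generates a copy of the one-dimensional simple H_n(0)-module S_I in the left regular representation. -/

import Mathlib

/-!
STATEMENT 4: Let `I` be a composition of `n` and `τ ∈ S_n` a permutation whose
descent composition `C(τ)` has mirror image equal to `I`.  Then the Yang-Baxter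
element `Y_{ω_n}(τ) ∈ H_n(0)` satisfies `T_i · Y_{ω_n}(τ) = -Y_{ω_n}(τ)` if
`i ∈ D(I)` and `T_i · Y_{ω_n}(τ) = 0` otherwise; that is, it equals `η_I` and
generates a copy of the one-dimensional simple module `S_I` in the left regular
representation (in particular it is nonzero).

The condition `‾C(τ) = I` is expressed through descent sets (0-indexed): `i` is a
descent of `I` iff `n-2-i` is a descent of `τ`.  The Yang-Baxter basis is encoded by
quantifying over any family `Y` satisfying its defining recursion.
-/

namespace AKSPaper

noncomputable section

/-- Defining relations of the 0-Hecke algebra `H_n(0)`.  The generator indexed by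
`i : Fin (n-1)` is `T_{i+1}` (1-indexed), acting on 0-indexed positions `i, i+1`. -/
inductive HeckeRel (n : ℕ) :
    FreeAlgebra ℂ (Fin (n - 1)) → FreeAlgebra ℂ (Fin (n - 1)) → Prop
  | quad (i : Fin (n - 1)) :
      HeckeRel n (FreeAlgebra.ι ℂ i * (1 + FreeAlgebra.ι ℂ i)) 0
  | braid (i j : Fin (n - 1)) (h : (i : ℕ) + 1 = j) :
      HeckeRel n (FreeAlgebra.ι ℂ i * FreeAlgebra.ι ℂ j * FreeAlgebra.ι ℂ i)
        (FreeAlgebra.ι ℂ j * FreeAlgebra.ι ℂ i * FreeAlgebra.ι ℂ j)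
  | comm (i j : Fin (n - 1)) (h : (i : ℕ) + 2 ≤ j ∨ (j : ℕ) + 2 ≤ i) :
      HeckeRel n (FreeAlgebra.ι ℂ i * FreeAlgebra.ι ℂ j)
        (FreeAlgebra.ι ℂ j * FreeAlgebra.ι ℂ i)

/-- The 0-Hecke algebra `H_n(0)`. -/
abbrev H (n : ℕ) := RingQuot (HeckeRel n)

/-- The generator `T_{i+1}` of `H_n(0)`. -/
def Tgen {n : ℕ} (i : Fin (n - 1)) : H n :=
  RingQuot.mkAlgHom ℂ (HeckeRel n) (FreeAlgebra.ι ℂ i)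

/-- The generator `T` acting on the 0-indexed positions `j`, `j+1`. -/
def Tpos {n : ℕ} (j : ℕ) (h : j + 1 < n) : H n := Tgen ⟨j, by omega⟩

/-- The elementary transposition exchanging the 0-indexed positions `j`, `j+1`. -/
def sw {n : ℕ} (j : ℕ) (h : j + 1 < n) : Equiv.Perm (Fin n) :=
  Equiv.swap ⟨j, by omega⟩ ⟨j + 1, h⟩

/-- The number of inversions of a permutation. -/
def invnum {n : ℕ} (σ : Equiv.Perm (Fin n)) : ℕ :=
  (Finset.univ.filter fun p : Fin n × Fin n => p.1 < p.2 ∧ σ p.2 < σ p.1).card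

/-- The Yang-Baxter element `Y_j(t, u)`: `T_j` if `t > u`, `1 + T_j` if `t ≤ u`. -/
def Ygen {n : ℕ} {α : Type*} [LinearOrder α] (j : ℕ) (h : j + 1 < n) (t u : α) : H n :=
  if t ≤ u then 1 + Tpos j h else Tpos j h

/-- `Y` is the family of Yang-Baxter basis elements: `Y_id(x) = 1` and
`Y_{s_j τ}(x) = Y_j(x_{τ⁻¹(j)}, x_{τ⁻¹(j+1)}) * Y_τ(x)` whenever `s_j τ` has one more
inversion than `τ`. -/
def IsYBFamily {n : ℕ} {α : Type*} [LinearOrder α]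
    (Y : Equiv.Perm (Fin n) → (Fin n → α) → H n) : Prop :=
  (∀ x, Y 1 x = 1) ∧
  ∀ (j : ℕ) (h : j + 1 < n) (τ : Equiv.Perm (Fin n)) (x : Fin n → α),
    invnum (sw j h * τ) = invnum τ + 1 →
    Y (sw j h * τ) x =
      Ygen j h (x (τ⁻¹ ⟨j, by omega⟩)) (x (τ⁻¹ ⟨j + 1, h⟩)) * Y τ x

/-- `i` (0-indexed, `i+1 < n`) is a descent of the permutation `σ`. -/
def descPerm {n : ℕ} (σ : Equiv.Perm (Fin n)) (i : ℕ) : Prop :=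
  ∃ h : i + 1 < n, σ ⟨i + 1, h⟩ < σ ⟨i, by omega⟩

/-- `i` (0-indexed) is a descent of the composition `I` of `n`. -/
def descComp {n : ℕ} (I : Composition n) (i : ℕ) : Prop :=
  i + 1 < n ∧ ∃ k ∈ Finset.range (n + 1), (I.blocks.take k).sum = i + 1

/-!
Since `ω_n` has a descent at every position, the defining recursion peels off a left factor
`Y_j(x_{n-2-j}, x_{n-1-j})` of `Y_{ω_n}(x)` at any `j` (0-indexed). With `x = τ` this factor is
`T_j` exactly when `τ` has a descent at `n-2-j`, i.e. when `j ∈ D(I)`, and `1 + T_j` otherwise;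
`T_j² = -T_j` and `T_j (1 + T_j) = 0` then give the action of `T_j`.

Nonvanishing is seen in a representation. The 0-Hecke monoid acts on `S_n` by bubble sorting
(`sortSwap`), and since the sorting maps are idempotent and satisfy the braid relations,
`T_j ↦ π_j^* - 1`, with `π_j^*` the pullback of functions along the `j`-th sorting map, respects the
relations of `H_n(0)`. Applied to the indicator of the identity, `Y_σ(x)` yields a function that is
`1` at `σ` and vanishes at every permutation with more inversions than `σ`.
-/

open Equiv LinearMap

section Generators

variable {n : ℕ}

lemma Tpos_mul_one_add_self (j : ℕ) (h : j + 1 < n) : Tpos j h * (1 + Tpos j h) = 0 := by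
  simpa [Tpos, Tgen] using RingQuot.mkAlgHom_rel ℂ (HeckeRel.quad (n := n) ⟨j, by omega⟩)

lemma Tpos_mul_self (j : ℕ) (h : j + 1 < n) : Tpos j h * Tpos j h = -Tpos j h := by
  have h₀ := Tpos_mul_one_add_self j h
  rw [mul_add, mul_one] at h₀
  exact eq_neg_of_add_eq_zero_right h₀

end Generators

section Inversions

variable {n : ℕ}

lemma invnum_swap_mul {u v : Fin n} (hv : (v : ℕ) = u + 1) {σ : Perm (Fin n)}
    (hσ : σ⁻¹ u < σ⁻¹ v) : invnum (swap u v * σ) = invnum σ + 1 := by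
  unfold invnum
  rw [← Finset.card_insert_of_notMem (a := (σ⁻¹ u, σ⁻¹ v))]
  · congr 1
    ext ⟨a, b⟩
    obtain ⟨A, rfl⟩ := σ⁻¹.surjective a
    obtain ⟨B, rfl⟩ := σ⁻¹.surjective b
    rw [Finset.mem_insert, Finset.mem_filter, Finset.mem_filter]
    simp only [Finset.mem_univ, true_and, Prod.mk.injEq, Perm.mul_apply, Perm.coe_inv,
      Equiv.apply_symm_apply, EmbeddingLike.apply_eq_iff_eq] at hσ ⊢
    rw [swap_apply_def, swap_apply_def]
    split_ifs <;> subst_vars <;>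
      simp only [Fin.lt_def, Fin.ext_iff, and_self, true_or, iff_true] at * <;> omega
  · simp only [Finset.mem_filter, Perm.coe_inv, Equiv.apply_symm_apply, Fin.lt_def, hv]
    omega

lemma exists_descent_of_ne_one {σ : Perm (Fin n)} (hσ : σ ≠ 1) :
    ∃ (j : ℕ) (hj : j + 1 < n), σ⁻¹ ⟨j + 1, hj⟩ < σ⁻¹ ⟨j, by omega⟩ := by
  obtain _ | m := n
  · exact absurd (Subsingleton.elim σ 1) hσ
  have hmono : ¬ Monotone ⇑σ⁻¹ := by rwa [Perm.monotone_iff, inv_eq_one]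
  rw [Fin.monotone_iff_le_succ] at hmono
  push Not at hmono
  obtain ⟨i, hi⟩ := hmono
  exact ⟨i, by omega, hi⟩

end Inversions

section SortingAction

variable {n : ℕ}

def sortSwap (u v : Fin n) (σ : Perm (Fin n)) : Perm (Fin n) :=
  if σ⁻¹ v < σ⁻¹ u then swap u v * σ else σ

lemma sortSwap_idem (u v : Fin n) (σ : Perm (Fin n)) :
    sortSwap u v (sortSwap u v σ) = sortSwap u v σ := by
  unfold sortSwap
  split_ifs <;> simp_all [lt_asymm]

lemma sortSwap_comm {u v w z : Fin n} (huw : u ≠ w) (huz : u ≠ z) (hvw : v ≠ w)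
    (hvz : v ≠ z) (σ : Perm (Fin n)) :
    sortSwap u v (sortSwap w z σ) = sortSwap w z (sortSwap u v σ) := by
  have hw : swap u v w = w := swap_apply_of_ne_of_ne huw.symm hvw.symm
  have hz : swap u v z = z := swap_apply_of_ne_of_ne huz.symm hvz.symm
  have hu : swap w z u = u := swap_apply_of_ne_of_ne huw huz
  have hv : swap w z v = v := swap_apply_of_ne_of_ne hvw hvz
  have hcomm : swap u v * swap w z = swap w z * swap u v := by
    rw [swap_mul_eq_mul_swap, swap_inv, hu, hv]
  unfold sortSwap
  split_ifs <;> simp_all [← mul_assoc] <;> order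

lemma sortSwap_braid {u v w : Fin n} (huv : u ≠ v) (huw : u ≠ w) (hvw : v ≠ w)
    (σ : Perm (Fin n)) :
    sortSwap u v (sortSwap v w (sortSwap u v σ)) =
      sortSwap v w (sortSwap u v (sortSwap v w σ)) := by
  have hw : swap u v w = w := swap_apply_of_ne_of_ne huw.symm hvw.symm
  have hu : swap v w u = u := swap_apply_of_ne_of_ne huv huw
  have hbraid : swap u v * swap v w * swap u v = swap v w * swap u v * swap v w := by
    rw [swap_mul_swap_mul_swap huv huw, swap_comm w u,
      ← swap_mul_swap_mul_swap hvw.symm huw.symm, swap_comm v u, swap_comm w v]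
  unfold sortSwap
  split_ifs <;> simp_all [← mul_assoc] <;> order

end SortingAction

section IdempotentSubOne

variable {R : Type*} [Ring R] {P : R}

lemma sub_one_mul_one_add_sub_one (hP : P * P = P) : (P - 1) * (1 + (P - 1)) = 0 := by
  rw [add_sub_cancel, sub_mul, hP, one_mul, sub_self]

lemma sub_one_mul_sub_one_mul_sub_one (hP : P * P = P) (Q : R) :
    (P - 1) * (Q - 1) * (P - 1) = P * Q * P - P * Q - Q * P + P + Q - 1 := by
  have h : (P - 1) * (Q - 1) * (P - 1) = P * Q * P - P * Q - P * P + P - Q * P + Q + P - 1 := by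
    noncomm_ring
  rw [h, hP]
  abel

lemma sub_one_braid {Q : R} (hP : P * P = P) (hQ : Q * Q = Q) (hPQ : P * Q * P = Q * P * Q) :
    (P - 1) * (Q - 1) * (P - 1) = (Q - 1) * (P - 1) * (Q - 1) := by
  rw [sub_one_mul_sub_one_mul_sub_one hP, sub_one_mul_sub_one_mul_sub_one hQ, hPQ]
  abel

end IdempotentSubOne

lemma funLeft_mul_funLeft {R M X : Type*} [Semiring R] [AddCommMonoid M] [Module R M]
    (f g : X → X) :
    (funLeft R M f : Module.End R (X → M)) * funLeft R M g = funLeft R M (g ∘ f) :=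
  rfl

section SortingRepresentation

variable {n : ℕ}

def heckeOp (i : Fin (n - 1)) : Module.End ℂ (Perm (Fin n) → ℂ) :=
  funLeft ℂ ℂ (sortSwap ⟨i, by omega⟩ ⟨i + 1, by omega⟩) - 1

lemma funLeft_sortSwap_idem (u v : Fin n) :
    (funLeft ℂ ℂ (sortSwap u v) : Module.End ℂ (Perm (Fin n) → ℂ)) * funLeft ℂ ℂ (sortSwap u v)
      = funLeft ℂ ℂ (sortSwap u v) := by
  rw [funLeft_mul_funLeft]
  exact congrArg (funLeft ℂ ℂ) (funext (sortSwap_idem u v))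

lemma heckeOp_quad (i : Fin (n - 1)) : heckeOp i * (1 + heckeOp i) = 0 :=
  sub_one_mul_one_add_sub_one (funLeft_sortSwap_idem _ _)

lemma heckeOp_braid (i j : Fin (n - 1)) (hij : (i : ℕ) + 1 = j) :
    heckeOp i * heckeOp j * heckeOp i = heckeOp j * heckeOp i * heckeOp j := by
  obtain ⟨i, hi⟩ := i
  obtain ⟨j, hj⟩ := j
  simp only at hij
  subst hij
  refine sub_one_braid (funLeft_sortSwap_idem _ _) (funLeft_sortSwap_idem _ _) ?_
  simp only [funLeft_mul_funLeft]
  exact congrArg (funLeft ℂ ℂ) (funext fun σ => sortSwap_braid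
    (by simp) (by simp; omega) (by simp) σ)

lemma heckeOp_comm (i j : Fin (n - 1)) (hij : (i : ℕ) + 2 ≤ j ∨ (j : ℕ) + 2 ≤ i) :
    heckeOp i * heckeOp j = heckeOp j * heckeOp i := by
  refine ((Commute.sub_left ?_ (Commute.one_left _)).sub_right (Commute.one_right _)).eq
  simp only [Commute, SemiconjBy, funLeft_mul_funLeft]
  exact congrArg (funLeft ℂ ℂ) (funext fun σ => (sortSwap_comm (by simp [Fin.ext_iff]; omega)
    (by simp [Fin.ext_iff]; omega) (by simp [Fin.ext_iff]; omega) (by simp [Fin.ext_iff]; omega)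
    σ).symm)

def sortRep (n : ℕ) : H n →ₐ[ℂ] Module.End ℂ (Perm (Fin n) → ℂ) :=
  RingQuot.liftAlgHom ℂ ⟨FreeAlgebra.lift ℂ heckeOp, fun a b hab => by
    induction hab with
    | quad i => simpa using heckeOp_quad i
    | braid i j hij => simpa using heckeOp_braid i j hij
    | comm i j hij => simpa using heckeOp_comm i j hij⟩

lemma sortRep_Tpos (j : ℕ) (h : j + 1 < n) :
    sortRep n (Tpos j h) = funLeft ℂ ℂ (sortSwap ⟨j, by omega⟩ ⟨j + 1, h⟩) - 1 := by
  rw [sortRep, Tpos, Tgen, RingQuot.liftAlgHom_mkAlgHom_apply, FreeAlgebra.lift_ι_apply]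
  rfl

lemma sortRep_Ygen {α : Type*} [LinearOrder α] (j : ℕ) (h : j + 1 < n) (t s : α) :
    sortRep n (Ygen j h t s) =
      funLeft ℂ ℂ (sortSwap ⟨j, by omega⟩ ⟨j + 1, h⟩) - (if t ≤ s then 0 else 1 : ℂ) • 1 := by
  unfold Ygen
  split_ifs <;> simp [sortRep_Tpos]

end SortingRepresentation

section LeadingTerm

variable {n : ℕ}

def HasLeadingTerm (g : Perm (Fin n) → ℂ) (σ : Perm (Fin n)) : Prop :=
  g σ = 1 ∧ ∀ μ, invnum σ < invnum μ → g μ = 0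

lemma invnum_le_invnum_sortSwap_add_one {u v : Fin n} (hv : (v : ℕ) = u + 1)
    (μ : Perm (Fin n)) : invnum μ ≤ invnum (sortSwap u v μ) + 1 := by
  unfold sortSwap
  split_ifs with h
  · have hasc : (swap u v * μ)⁻¹ u < (swap u v * μ)⁻¹ v := by simpa using h
    have := invnum_swap_mul hv hasc
    rw [swap_mul_self_mul] at this
    omega
  · omega

lemma HasLeadingTerm.funLeft_sortSwap_sub {g : Perm (Fin n) → ℂ} {σ : Perm (Fin n)}
    (hg : HasLeadingTerm g σ) {u v : Fin n} (hv : (v : ℕ) = u + 1) (hσ : σ⁻¹ u < σ⁻¹ v)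
    (c : ℂ) : HasLeadingTerm (funLeft ℂ ℂ (sortSwap u v) g - c • g) (swap u v * σ) := by
  have hlen := invnum_swap_mul hv hσ
  have hsort : sortSwap u v (swap u v * σ) = σ := by
    rw [sortSwap, if_pos (by simpa using hσ), swap_mul_self_mul]
  refine ⟨?_, fun μ hμ => ?_⟩
  · simp [hsort, hg.1, hg.2 (swap u v * σ) (by omega)]
  · have := invnum_le_invnum_sortSwap_add_one hv μ
    simp [hg.2 μ (by omega), hg.2 (sortSwap u v μ) (by omega)]

theorem IsYBFamily.hasLeadingTerm {α : Type*} [LinearOrder α]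
    {Y : Perm (Fin n) → (Fin n → α) → H n} (hY : IsYBFamily Y) (x : Fin n → α)
    (σ : Perm (Fin n)) : HasLeadingTerm (sortRep n (Y σ x) (Pi.single 1 1)) σ := by
  by_cases hσ : σ = 1
  · subst hσ
    refine ⟨by simp [hY.1], fun μ hμ => ?_⟩
    have hμ1 : μ ≠ 1 := by rintro rfl; simp at hμ
    simp [hY.1, hμ1]
  obtain ⟨j, hj, hdesc⟩ := exists_descent_of_ne_one hσ
  obtain ⟨σ', rfl⟩ : ∃ σ', σ = sw j hj * σ' := ⟨sw j hj * σ, by simp [sw, swap_mul_self_mul]⟩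
  have hasc : σ'⁻¹ ⟨j, by omega⟩ < σ'⁻¹ ⟨j + 1, hj⟩ := by simpa [sw] using hdesc
  have hlen := invnum_swap_mul rfl hasc
  rw [hY.2 j hj σ' x hlen, map_mul, Module.End.mul_apply, sortRep_Ygen]
  exact (hY.hasLeadingTerm x σ').funLeft_sortSwap_sub rfl hasc _
termination_by invnum σ
decreasing_by
  subst_vars
  exact (Nat.lt_succ_self _).trans_eq hlen.symm

theorem IsYBFamily.ne_zero {α : Type*} [LinearOrder α]
    {Y : Perm (Fin n) → (Fin n → α) → H n} (hY : IsYBFamily Y) (σ : Perm (Fin n))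
    (x : Fin n → α) : Y σ x ≠ 0 := by
  intro h
  simpa [h] using (hY.hasLeadingTerm x σ).1

end LeadingTerm

lemma IsYBFamily.revPerm_eq {n : ℕ} {α : Type*} [LinearOrder α]
    {Y : Perm (Fin n) → (Fin n → α) → H n} (hY : IsYBFamily Y) (x : Fin n → α)
    (j : ℕ) (h : j + 1 < n) :
    Y Fin.revPerm x = Ygen j h (x ⟨n - 2 - j, by omega⟩) (x ⟨n - 2 - j + 1, by omega⟩) *
      Y (sw j h * Fin.revPerm) x := by
  have hu : (sw j h * Fin.revPerm : Perm (Fin n))⁻¹ ⟨j, by omega⟩ = ⟨n - 2 - j, by omega⟩ := by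
    ext; simp [sw]; omega
  have hv : (sw j h * Fin.revPerm : Perm (Fin n))⁻¹ ⟨j + 1, h⟩ = ⟨n - 2 - j + 1, by omega⟩ := by
    ext; simp [sw]; omega
  have hlen := invnum_swap_mul (u := ⟨j, by omega⟩) (v := ⟨j + 1, h⟩) rfl
    (by rw [hu, hv]; simp [Fin.lt_def])
  have hrec := hY.2 j h _ x hlen
  rwa [sw, swap_mul_self_mul, ← sw, hu, hv] at hrec

theorem yangBaxter_eta (n : ℕ)
    (Y : Equiv.Perm (Fin n) → (Fin n → Fin n) → H n) (hY : IsYBFamily Y)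
    (I : Composition n) (τ : Equiv.Perm (Fin n))
    (hτ : ∀ i : ℕ, i + 1 < n → (descComp I i ↔ descPerm τ (n - 2 - i))) :
    (∀ (j : ℕ) (h : j + 1 < n),
      (descComp I j → Tpos j h * Y Fin.revPerm ⇑τ = -(Y Fin.revPerm ⇑τ)) ∧
      (¬ descComp I j → Tpos j h * Y Fin.revPerm ⇑τ = 0)) ∧
    Y Fin.revPerm ⇑τ ≠ 0 := by
  refine ⟨fun j h => ?_, hY.ne_zero _ _⟩
  have hdesc : descComp I j ↔
      τ ⟨n - 2 - j + 1, by omega⟩ < τ ⟨n - 2 - j, by omega⟩ :=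
    (hτ j h).trans ⟨fun ⟨_, hlt⟩ => hlt, fun hlt => ⟨by omega, hlt⟩⟩
  rw [hY.revPerm_eq τ j h, Ygen, ← mul_assoc, hdesc]
  constructor
  · intro hlt
    rw [if_neg (not_le.2 hlt), Tpos_mul_self]
    exact neg_mul (Tpos j h) _
  · intro hle
    rw [if_pos (not_lt.1 hle), Tpos_mul_one_add_self, zero_mul]

end

end AKSPaper
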